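/- arXiv:1412.5797 — 8 statements merged into one kernel-verified Lean document; each statement's English description precedes it below -/
import Mathlib

section
/- Let p be an odd prime and R = ℤ[i]/pℤ[i]. If β ∈ R satisfies N(β) = 1, then 1 + β is either zero or not a zero divisor of R. -/
/-- The ring `ℤ[i]/pℤ[i]`, modeled as pairs `(a, b)` over `ℤ/pℤ` representing `a + bi`. -/
abbrev R (p : ℕ) := ZMod p × ZMod p

/-- Multiplication in `ℤ[i]/pℤ[i]`. -/
def Gmul {p : ℕ} (β γ : R p) : R p := (β.1 * γ.1 - β.2 * γ.2, β.1 * γ.2 + β.2 * γ.1)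

/-- The norm `N(a+bi) = a² + b²`. -/
def Gnorm {p : ℕ} (β : R p) : ZMod p := β.1 ^ 2 + β.2 ^ 2

/-!
Write `β = a + bi`. Multiplying by the conjugate shows that `δ γ = 0` forces `N(δ) γ = 0`, so
`δ` is not a zero divisor as soon as `N(δ)` is a unit of the field `ℤ/pℤ`. For `δ = 1 + β` with
`N(β) = 1` one has `N(1 + β) = 2(1 + a)`. If this vanishes then, `p` being odd, `a = -1`, hence
`b² = 1 - a² = 0` and `1 + β = 0`.
-/

variable {p : ℕ}

def Gconj (β : R p) : R p := (β.1, -β.2)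

theorem Gmul_Gconj_Gmul (δ γ : R p) : Gmul (Gconj δ) (Gmul δ γ) = Gnorm δ • γ := by
  ext <;> simp only [Gmul, Gconj, Gnorm, Prod.smul_fst, Prod.smul_snd, smul_eq_mul] <;> ring

theorem Gnorm_smul_eq_zero_of_Gmul_eq_zero {δ γ : R p} (h : Gmul δ γ = 0) :
    Gnorm δ • γ = 0 := by
  rw [← Gmul_Gconj_Gmul, h]
  simp [Gmul]

theorem eq_zero_of_Gmul_eq_zero [Fact p.Prime] {δ γ : R p} (hδ : Gnorm δ ≠ 0)
    (h : Gmul δ γ = 0) : γ = 0 :=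
  (smul_eq_zero.mp (Gnorm_smul_eq_zero_of_Gmul_eq_zero h)).resolve_left hδ

theorem Gnorm_one_add (β : R p) :
    Gnorm (((1 : ZMod p), (0 : ZMod p)) + β) = 1 + 2 * β.1 + Gnorm β := by
  simp only [Gnorm, Prod.fst_add, Prod.snd_add]
  ring

theorem one_add_eq_zero_of_Gnorm_one_add_eq_zero [Fact p.Prime] (hodd : p ≠ 2) {β : R p}
    (hβ : Gnorm β = 1) (h : Gnorm (((1 : ZMod p), (0 : ZMod p)) + β) = 0) :
    ((1 : ZMod p), (0 : ZMod p)) + β = 0 := by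
  obtain ⟨a, b⟩ := β
  have h2 : (2 : ZMod p) ≠ 0 := Ring.two_ne_zero (by rwa [ZMod.ringChar_zmod_n])
  rw [Gnorm_one_add, hβ] at h
  have ha : 1 + a = 0 := by
    refine (mul_eq_zero.mp (?_ : 2 * (1 + a) = 0)).resolve_left h2
    linear_combination h
  have hb : b = 0 := by
    refine pow_eq_zero_iff (n := 2) (by norm_num) |>.mp ?_
    unfold Gnorm at hβ
    linear_combination hβ - (a - 1) * ha
  ext <;> simp [ha, hb]

/-- If `N(β) = 1` in `ℤ[i]/pℤ[i]`, `p` an odd prime, then `1 + β` is zero or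
not a zero divisor. -/
theorem one_add_not_zero_divisor (p : ℕ) (hp : p.Prime) (hodd : p ≠ 2) (β : R p)
    (hβ : Gnorm β = 1) :
    ((1 : ZMod p), (0 : ZMod p)) + β = 0 ∨
      ∀ γ : R p, Gmul (((1 : ZMod p), (0 : ZMod p)) + β) γ = 0 → γ = 0 := by
  have : Fact p.Prime := ⟨hp⟩
  by_cases h : Gnorm (((1 : ZMod p), (0 : ZMod p)) + β) = 0
  · exact .inl (one_add_eq_zero_of_Gnorm_one_add_eq_zero hodd hβ h)
  · exact .inr fun γ => eq_zero_of_Gmul_eq_zero h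
end

section
/- Let p be an odd prime, R = ℤ[i]/pℤ[i], and H = {β ∈ R : N(β) = 1}. For any nonzero γ ∈ R (including zero divisors), the set γH = {γβ : β ∈ H} has the same cardinality as H. -/
section

variable {p : ℕ}

lemma Gmul_assoc (α β γ : R p) : Gmul (Gmul α β) γ = Gmul α (Gmul β γ) := by
  ext <;> simp only [Gmul] <;> ring

lemma Gmul_comm (β γ : R p) : Gmul β γ = Gmul γ β := by
  ext <;> simp only [Gmul] <;> ring

/-- The unit of `ℤ[i]/pℤ[i]` is `(1, 0)`, not the unit `(1, 1)` of the product ring `R p`. -/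
lemma Gmul_one (β : R p) : Gmul β (1, 0) = β := by
  ext <;> simp [Gmul]

lemma Gmul_Gconj_self (β : R p) : Gmul β (Gconj β) = (Gnorm β, 0) := by
  ext <;> simp only [Gmul, Gconj, Gnorm] <;> ring

lemma Gnorm_Gmul (β γ : R p) : Gnorm (Gmul β γ) = Gnorm β * Gnorm γ := by
  simp only [Gnorm, Gmul]; ring

lemma Gnorm_Gconj (β : R p) : Gnorm (Gconj β) = Gnorm β := by
  simp [Gnorm, Gconj]

lemma eq_one_of_Gmul_eq_self [Fact p.Prime] (h2 : (2 : ZMod p) ≠ 0) {γ ω : R p} (hγ : γ ≠ 0)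
    (hω : Gnorm ω = 1) (h : Gmul γ ω = γ) : ω = (1, 0) := by
  obtain ⟨a, b⟩ := γ
  obtain ⟨r, s⟩ := ω
  simp only [Gmul, Gnorm, Prod.mk.injEq] at h hω ⊢
  obtain ⟨h₁, h₂⟩ := h
  -- `N(ω - 1) γ = conj(ω - 1) · γ(ω - 1) = 0`, componentwise
  have ha : ((r - 1) ^ 2 + s ^ 2) * a = 0 := by linear_combination (r - 1) * h₁ + s * h₂
  have hb : ((r - 1) ^ 2 + s ^ 2) * b = 0 := by linear_combination (r - 1) * h₂ - s * h₁
  have hδ : (r - 1) ^ 2 + s ^ 2 = 0 := by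
    by_contra hne
    exact hγ (Prod.ext ((mul_eq_zero.mp ha).resolve_left hne) ((mul_eq_zero.mp hb).resolve_left hne))
  have hr : r = 1 := by
    have : 2 * (r - 1) = 0 := by linear_combination hω - hδ
    exact sub_eq_zero.mp ((mul_eq_zero.mp this).resolve_left h2)
  subst hr
  exact ⟨rfl, pow_eq_zero_iff two_ne_zero |>.mp (by linear_combination hδ)⟩

lemma injOn_Gmul_Gnorm_eq_one [Fact p.Prime] (h2 : (2 : ZMod p) ≠ 0) {γ : R p} (hγ : γ ≠ 0) :
    Set.InjOn (Gmul γ) {β | Gnorm β = 1} := by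
  intro β₁ hβ₁ β₂ hβ₂ h
  have hβ₂conj : Gmul β₂ (Gconj β₂) = (1, 0) := by rw [Gmul_Gconj_self, hβ₂]
  set ω := Gmul β₁ (Gconj β₂)
  have hω : Gnorm ω = 1 := by rw [Gnorm_Gmul, Gnorm_Gconj, hβ₁, hβ₂, one_mul]
  have hγω : Gmul γ ω = γ := by
    rw [← Gmul_assoc, h, Gmul_assoc, hβ₂conj, Gmul_one]
  calc β₁ = Gmul β₁ (Gmul β₂ (Gconj β₂)) := by rw [hβ₂conj, Gmul_one]
    _ = Gmul ω β₂ := by rw [Gmul_comm β₂, Gmul_assoc]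
    _ = β₂ := by rw [eq_one_of_Gmul_eq_self h2 hγ hω hγω, Gmul_comm, Gmul_one]

end

/-- For `p` an odd prime and any nonzero `γ ∈ ℤ[i]/pℤ[i]` (possibly a zero divisor),
the set `γH = {γβ : N(β) = 1}` has the same cardinality as `H = {β : N(β) = 1}`. -/
theorem card_coset (p : ℕ) [Fact p.Prime] (hodd : p ≠ 2) (γ : R p) (hγ : γ ≠ 0) :
    ((Finset.univ.filter (fun β : R p => Gnorm β = 1)).image (fun β => Gmul γ β)).card =
      (Finset.univ.filter (fun β : R p => Gnorm β = 1)).card := by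
  have h2 : (2 : ZMod p) ≠ 0 := Ring.two_ne_zero (by rwa [ZMod.ringChar_zmod_n])
  refine Finset.card_image_of_injOn ?_
  simpa using injOn_Gmul_Gnorm_eq_one h2 hγ
end

section
/- Let p be an odd prime, and for c ∈ ℤ/pℤ with c ≠ 0, define N_p(c) = {N(1+β) : β ∈ ℤ[i]/pℤ[i], N(β) = c} ⊆ ℤ/pℤ. Then |N_p(c)| = n + 1 if c is a nonzero quadratic residue mod p, and |N_p(c)| = n if c is a quadratic non-residue mod p, where n = 2[p/4] and the set of norm-c elements has cardinality 2n. -/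
/-!
Writing `β = a + bi`, we have `N(1 + β) = 1 + 2a + N(β)`, so `N_p(c)` is the image, under the
injective map `a ↦ 1 + 2a + c`, of the set of `a` for which `c - a²` is a square. With `χ` the
quadratic character, `2 · #{a | c - a² is a square} = p + ∑ₐ χ(c - a²) + #{a | a² = c}`, and after
the substitutions `t = a²`, `t = c x` the character sum becomes the Jacobi sum `J(χ, χ) = -χ(-1)`.
Hence twice the count is `p + 1 + χ(c) - χ(-1)`, where `χ(-1) = ±1` as `p ≡ ±1 (mod 4)`.
-/

open Finset

section QuadraticChar

variable {F : Type*} [Field F] [Fintype F] [DecidableEq F]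

theorem sum_comp_sq_eq_sum_quadraticChar_add_one_mul (hF : ringChar F ≠ 2) (f : F → ℤ) :
    ∑ a : F, f (a ^ 2) = ∑ t : F, (quadraticChar F t + 1) * f t := by
  rw [← sum_fiberwise univ (fun a : F => a ^ 2)]
  refine sum_congr rfl fun t _ => ?_
  rw [← quadraticChar_card_sqrts hF t, Set.toFinset_ofPred, sum_congr rfl
    (fun a ha => by rw [(mem_filter.mp ha).2]), sum_const, nsmul_eq_mul]

theorem sum_quadraticChar_mul_quadraticChar_sub {c : F} (hc : c ≠ 0) (hF : ringChar F ≠ 2) :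
    ∑ t : F, quadraticChar F t * quadraticChar F (c - t) = -quadraticChar F (-1) := by
  have hχ := quadraticChar_isQuadratic F
  rw [← jacobiSum_nontrivial_inv (quadraticChar_ne_one hF), hχ.inv, jacobiSum,
    ← Equiv.sum_comp (Equiv.mulLeft₀ c hc)]
  refine sum_congr rfl fun x _ => ?_
  rw [Equiv.mulLeft₀_apply, ← mul_one_sub, map_mul, map_mul]
  linear_combination (quadraticChar F x * quadraticChar F (1 - x)) * quadraticChar_sq_one hc

theorem sum_quadraticChar_sub_sq {c : F} (hc : c ≠ 0) (hF : ringChar F ≠ 2) :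
    ∑ a : F, quadraticChar F (c - a ^ 2) = -quadraticChar F (-1) := by
  have hshift : ∑ t : F, quadraticChar F (c - t) = 0 := by
    rw [← quadraticChar_sum_zero hF]
    exact Equiv.sum_comp (Equiv.subLeft c) _
  rw [sum_comp_sq_eq_sum_quadraticChar_add_one_mul hF (fun t => quadraticChar F (c - t)),
    ← sum_quadraticChar_mul_quadraticChar_sub hc hF]
  simp only [add_one_mul, sum_add_distrib, hshift, add_zero]

theorem ite_isSquare_eq_quadraticChar_add (x : F) :
    (if IsSquare x then 2 else 0 : ℤ) = quadraticChar F x + 1 + if x = 0 then 1 else 0 := by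
  by_cases h0 : x = 0
  · simp [h0]
  by_cases hx : IsSquare x
  · simp [hx, h0, (quadraticChar_one_iff_isSquare h0).mpr hx]
  · simp [hx, h0, quadraticChar_neg_one_iff_not_isSquare.mpr hx]

theorem two_mul_card_isSquare_sub_sq {c : F} (hc : c ≠ 0) (hF : ringChar F ≠ 2) :
    2 * (#{a : F | IsSquare (c - a ^ 2)} : ℤ) =
      Fintype.card F + 1 + quadraticChar F c - quadraticChar F (-1) := by
  have hroots : (#{a : F | c - a ^ 2 = 0} : ℤ) = quadraticChar F c + 1 := by
    simp_rw [sub_eq_zero, eq_comm (a := c)]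
    rw [← quadraticChar_card_sqrts hF c, Set.toFinset_ofPred]
  calc 2 * (#{a : F | IsSquare (c - a ^ 2)} : ℤ)
      = ∑ a : F, (if IsSquare (c - a ^ 2) then 2 else 0 : ℤ) := by
        rw [card_filter, Nat.cast_sum, mul_sum]
        exact sum_congr rfl fun a _ => by split_ifs <;> simp
    _ = ∑ a : F, quadraticChar F (c - a ^ 2) + Fintype.card F + #{a : F | c - a ^ 2 = 0} := by
        simp only [ite_isSquare_eq_quadraticChar_add, sum_add_distrib, sum_const, card_univ,
          sum_boole, nsmul_eq_mul, mul_one]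
    _ = _ := by rw [sum_quadraticChar_sub_sq hc hF, hroots]; ring

end QuadraticChar

variable {p : ℕ}

theorem gnorm_one_add (β : R p) : Gnorm ((1, 0) + β) = 1 + 2 * β.1 + Gnorm β := by
  simp only [Gnorm, Prod.fst_add, Prod.snd_add]; ring

theorem image_gnorm_one_add [NeZero p] (c : ZMod p) :
    (univ.filter fun β : R p => Gnorm β = c).image (fun β => Gnorm ((1, 0) + β)) =
      (univ.filter fun a : ZMod p => IsSquare (c - a ^ 2)).image (fun a => 1 + 2 * a + c) := by
  ext x
  simp only [mem_image, mem_filter_univ, gnorm_one_add]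
  constructor
  · rintro ⟨⟨a, b⟩, hab, rfl⟩
    exact ⟨a, ⟨b, by rw [← hab, Gnorm]; ring⟩, by rw [hab]⟩
  · rintro ⟨a, ⟨b, hb⟩, rfl⟩
    have hab : Gnorm (a, b) = c := by unfold Gnorm; linear_combination -hb
    exact ⟨(a, b), hab, by rw [hab]⟩

theorem card_image_gnorm_one_add [Fact p.Prime] (hp : p ≠ 2) (c : ZMod p) :
    #((univ.filter fun β : R p => Gnorm β = c).image (fun β => Gnorm ((1, 0) + β))) =
      #{a : ZMod p | IsSquare (c - a ^ 2)} := by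
  have h2 : (2 : ZMod p) ≠ 0 := Ring.two_ne_zero (by rwa [ZMod.ringChar_zmod_n])
  rw [image_gnorm_one_add, card_image_of_injective]
  intro a b hab
  exact mul_left_cancel₀ h2 (by linear_combination hab)

/-- For `p` an odd prime, `n = 2[p/4]` (so `p = 2n+1` if `p ≡ 1 (mod 4)` and
`p = 2n-1` if `p ≡ 3 (mod 4)`) and `c ≠ 0` in `ℤ/pℤ`, the set
`N_p(c) = {N(1+β) : N(β) = c}` has `n+1` elements if `c` is a (nonzero) quadratic
residue and `n` elements otherwise. -/
theorem card_Np (p n : ℕ) [Fact p.Prime] (hodd : p ≠ 2)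
    (hn : if p % 4 = 1 then p = 2 * n + 1 else p = 2 * n - 1)
    (c : ZMod p) (hc : c ≠ 0) :
    (IsSquare c →
      ((Finset.univ.filter (fun β : R p => Gnorm β = c)).image
        (fun β => Gnorm (((1 : ZMod p), (0 : ZMod p)) + β))).card = n + 1) ∧
    (¬ IsSquare c →
      ((Finset.univ.filter (fun β : R p => Gnorm β = c)).image
        (fun β => Gnorm (((1 : ZMod p), (0 : ZMod p)) + β))).card = n) := by
  have hF : ringChar (ZMod p) ≠ 2 := by rwa [ZMod.ringChar_zmod_n]
  have hcount := two_mul_card_isSquare_sub_sq hc hF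
  rw [quadraticChar_neg_one hF, ZMod.card] at hcount
  have h2n : (2 * n : ℤ) = p - ZMod.χ₄ p := by
    have := (Nat.Prime.mod_two_eq_one_iff_ne_two Fact.out).mpr hodd
    rcases (by omega : p % 4 = 1 ∨ p % 4 = 3) with h4 | h4
    · rw [if_pos h4] at hn; rw [ZMod.χ₄_nat_one_mod_four h4]; omega
    · rw [if_neg (by omega)] at hn; rw [ZMod.χ₄_nat_three_mod_four h4]; omega
  rw [card_image_gnorm_one_add hodd]
  constructor
  · intro hsq
    rw [(quadraticChar_one_iff_isSquare hc).mpr hsq] at hcount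
    omega
  · intro hsq
    rw [quadraticChar_neg_one_iff_not_isSquare.mpr hsq] at hcount
    omega
end

section
/- Let p > 3 be a prime with p ≡ ±5 (mod 12). Then there is no β ∈ ℤ[i]/pℤ[i] with N(β) = 1 and N(1+β) = 1. -/
theorem ZMod.not_isSquare_three_of_mod_twelve {p : ℕ} [Fact p.Prime]
    (hmod : p % 12 = 5 ∨ p % 12 = 7) : ¬ IsSquare (3 : ZMod p) := by
  -- decided before the `Fact` instance below, which would put a free variable into the goal
  have two_not_square : ¬ IsSquare (2 : ZMod 3) := by decide
  have : Fact (Nat.Prime 3) := ⟨Nat.prime_three⟩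
  have hp3 : (p : ZMod 3) = ((p % 3 : ℕ) : ZMod 3) := (ZMod.natCast_mod p 3).symm
  rw [← Nat.cast_ofNat]
  rcases hmod with h | h
  · rw [ZMod.exists_sq_eq_prime_iff_of_mod_four_eq_one (by omega) (by norm_num), hp3,
      show p % 3 = 2 by omega]
    exact_mod_cast two_not_square
  · rw [ZMod.exists_sq_eq_prime_iff_of_mod_four_eq_three (by omega) (by norm_num) (by omega),
      not_not, hp3, show p % 3 = 1 by omega]
    exact ⟨1, by norm_num⟩

theorem isSquare_three_of_gnorm_eq_one {p : ℕ} {β : R p} (h : Gnorm β = 1)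
    (h' : Gnorm (((1 : ZMod p), (0 : ZMod p)) + β) = 1) : IsSquare (3 : ZMod p) := by
  obtain ⟨a, b⟩ := β
  simp only [Gnorm, Prod.fst_add, Prod.snd_add] at h h'
  exact ⟨2 * b, by linear_combination (2 * a - 1) * (h' - h) - 4 * h⟩

theorem no_norm_one_neighbor_general (p : ℕ) (hp : p.Prime)
    (hmod : p % 12 = 5 ∨ p % 12 = 7) :
    ¬ ∃ β : R p, Gnorm β = 1 ∧ Gnorm (((1 : ZMod p), (0 : ZMod p)) + β) = 1 := by
  have : Fact p.Prime := ⟨hp⟩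
  rintro ⟨β, h, h'⟩
  exact ZMod.not_isSquare_three_of_mod_twelve hmod (isSquare_three_of_gnorm_eq_one h h')

/-- For a prime `p > 3` with `p ≡ ±5 (mod 12)`, there is no `β ∈ ℤ[i]/pℤ[i]` with
`N(β) = 1` and `N(1+β) = 1`. -/
theorem no_norm_one_neighbor (p : ℕ) (hp : p.Prime) (hp3 : 3 < p)
    (hmod : p % 12 = 5 ∨ p % 12 = 7) :
    ¬ ∃ β : R p, Gnorm β = 1 ∧ Gnorm (((1 : ZMod p), (0 : ZMod p)) + β) = 1 :=
  no_norm_one_neighbor_general p hp hmod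
end

section
/- Let p ≡ 1 (mod 4) be prime and let ζ ∈ ℤ[i]/pℤ[i] be a proper zero divisor (ζ ≠ 0 and N(ζ) = 0). Then ζH = {xζ : x ∈ ℤ/pℤ, x ≠ 0}, where H = {β : N(β) = 1}. -/
/-!
A proper zero divisor is `ζ = a(1, t)` with `a ≠ 0` and `t² = -1`. Multiplication by `ζ` then
factors through the linear form `β ↦ β.1 - t β.2`: `ζβ = (β.1 - t β.2) ζ`, while the norm splits as
`N(β) = (β.1 - t β.2)(β.1 + t β.2)`. Since `p` is odd, `2t` is invertible and the two linear forms
can take any pair of values `(x, x⁻¹)`, so the scalars reached from `N(β) = 1` are exactly the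
nonzero ones.
-/

variable {p : ℕ}

theorem Gnorm_eq_mul {t : ZMod p} (ht : t ^ 2 = -1) (β : R p) :
    Gnorm β = (β.1 - t * β.2) * (β.1 + t * β.2) := by
  unfold Gnorm
  linear_combination β.2 ^ 2 * ht

theorem Gmul_eq_smul {t : ZMod p} (ht : t ^ 2 = -1) {ζ : R p} (hζ : ζ.2 = t * ζ.1) (β : R p) :
    Gmul ζ β = ((β.1 - t * β.2) * ζ.1, (β.1 - t * β.2) * ζ.2) := by
  unfold Gmul
  rw [hζ, Prod.mk.injEq]
  exact ⟨by ring, by linear_combination ζ.1 * β.2 * ht⟩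

theorem exists_sqrt_neg_one_of_Gnorm_eq_zero [Fact p.Prime] {ζ : R p} (hζ0 : ζ ≠ 0)
    (hζ : Gnorm ζ = 0) : ∃ t : ZMod p, t ^ 2 = -1 ∧ ζ.2 = t * ζ.1 := by
  obtain ⟨a, b⟩ := ζ
  unfold Gnorm at hζ
  have ha : a ≠ 0 := by
    rintro rfl
    have hb : b = 0 := pow_eq_zero_iff two_ne_zero |>.mp (by simpa using hζ)
    exact hζ0 (by rw [hb]; rfl)
  refine ⟨b / a, ?_, (div_mul_cancel₀ b ha).symm⟩
  field_simp
  linear_combination hζ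

theorem exists_sub_mul_eq_and_add_mul_eq [Fact p.Prime] (h2 : (2 : ZMod p) ≠ 0) {t : ZMod p}
    (ht : t ≠ 0) (x y : ZMod p) : ∃ β : R p, β.1 - t * β.2 = x ∧ β.1 + t * β.2 = y :=
  ⟨((x + y) / 2, (y - x) / (2 * t)), by constructor <;> field_simp <;> ring⟩

/-- For `p ≡ 1 (mod 4)` prime and `ζ` a proper zero divisor of `ℤ[i]/pℤ[i]`
(`ζ ≠ 0`, `N(ζ) = 0`), the set `ζH` equals `{xζ : x ∈ ℤ/pℤ, x ≠ 0}`. -/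
theorem zero_divisor_coset (p : ℕ) (hp : p.Prime) (hmod : p % 4 = 1)
    (ζ : R p) (hζ0 : ζ ≠ 0) (hζ : Gnorm ζ = 0) :
    {γ : R p | ∃ β : R p, Gnorm β = 1 ∧ γ = Gmul ζ β} =
      {γ : R p | ∃ x : ZMod p, x ≠ 0 ∧ γ = (x * ζ.1, x * ζ.2)} := by
  have : Fact p.Prime := ⟨hp⟩
  obtain ⟨t, ht, hζt⟩ := exists_sqrt_neg_one_of_Gnorm_eq_zero hζ0 hζ
  have h2 : (2 : ZMod p) ≠ 0 := Ring.two_ne_zero (by rw [ZMod.ringChar_zmod_n]; omega)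
  have ht0 : t ≠ 0 := by rintro rfl; simp at ht
  ext γ
  constructor
  · rintro ⟨β, hβ, rfl⟩
    exact ⟨_, left_ne_zero_of_mul_eq_one (Gnorm_eq_mul ht β ▸ hβ), Gmul_eq_smul ht hζt β⟩
  · rintro ⟨x, hx, rfl⟩
    obtain ⟨β, hsub, hadd⟩ := exists_sub_mul_eq_and_add_mul_eq h2 ht0 x x⁻¹
    refine ⟨β, ?_, ?_⟩
    · rw [Gnorm_eq_mul ht, hsub, hadd, mul_inv_cancel₀ hx]
    · rw [Gmul_eq_smul ht hζt, hsub]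
end

section
/- Let p ≡ 1 (mod 4) be prime and ζ ∈ ℤ[i]/pℤ[i] a proper zero divisor. Then {N(β + ζ) : β ∈ ℤ[i]/pℤ[i], N(β) = 1} = (ℤ/pℤ) \ {1}. -/
section SqAddSq

variable {F : Type*}

theorem sq_add_sq_eq_mul_of_sq_eq_neg_one [CommRing F] {k : F} (hk : k ^ 2 = -1) (x y : F) :
    x ^ 2 + y ^ 2 = (x + k * y) * (x - k * y) := by
  linear_combination y ^ 2 * hk

theorem add_sq_add_add_mul_sq_of_sq_eq_neg_one [CommRing F] {k : F} (hk : k ^ 2 = -1)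
    (x y a : F) : (x + a) ^ 2 + (y + k * a) ^ 2 = x ^ 2 + y ^ 2 + 2 * a * (x + k * y) := by
  linear_combination a ^ 2 * hk

theorem add_mul_ne_zero_of_sq_add_sq_eq_one [CommRing F] [Nontrivial F] {k : F}
    (hk : k ^ 2 = -1) {x y : F} (h : x ^ 2 + y ^ 2 = 1) : x + k * y ≠ 0 := by
  intro h0
  rw [sq_add_sq_eq_mul_of_sq_eq_neg_one hk, h0, zero_mul] at h
  exact zero_ne_one h

theorem exists_sq_add_sq_eq_one_and_add_mul_eq [Field F] (h2 : (2 : F) ≠ 0) {k : F}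
    (hk : k ^ 2 = -1) {u : F} (hu : u ≠ 0) : ∃ x y : F, x ^ 2 + y ^ 2 = 1 ∧ x + k * y = u := by
  have hk0 : k ≠ 0 := by rintro rfl; simp at hk
  -- the solution of `x + k y = u`, `x - k y = u⁻¹`
  refine ⟨(u + u⁻¹) / 2, (u - u⁻¹) / (2 * k), ?_, ?_⟩
  · field_simp
    linear_combination (u ^ 2 - 1) ^ 2 * hk
  · field_simp
    ring

theorem exists_sq_eq_neg_one_of_sq_add_sq_eq_zero [Field F] {a b : F} (hab : (a, b) ≠ 0)
    (h : a ^ 2 + b ^ 2 = 0) : a ≠ 0 ∧ ∃ k : F, k ^ 2 = -1 ∧ b = k * a := by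
  have ha : a ≠ 0 := by
    rintro rfl
    have hb : b = 0 := pow_eq_zero_iff two_ne_zero |>.mp (by linear_combination h)
    exact hab (by simp [hb])
  refine ⟨ha, b / a, ?_, by field_simp⟩
  field_simp
  linear_combination h

theorem setOf_sq_add_sq_eq_one_shift_eq_compl [Field F] (h2 : (2 : F) ≠ 0) {k a : F}
    (hk : k ^ 2 = -1) (ha : a ≠ 0) :
    {c : F | ∃ x y : F, x ^ 2 + y ^ 2 = 1 ∧ (x + a) ^ 2 + (y + k * a) ^ 2 = c} = {1}ᶜ := by
  ext c
  simp only [Set.mem_ofPred_eq, Set.mem_compl_singleton_iff,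
    add_sq_add_add_mul_sq_of_sq_eq_neg_one hk]
  constructor
  · rintro ⟨x, y, h1, rfl⟩
    rw [h1, ne_eq, add_eq_left]
    exact mul_ne_zero (mul_ne_zero h2 ha) (add_mul_ne_zero_of_sq_add_sq_eq_one hk h1)
  · intro hc
    have hu : (c - 1) / (2 * a) ≠ 0 := div_ne_zero (sub_ne_zero.mpr hc) (mul_ne_zero h2 ha)
    obtain ⟨x, y, h1, hxy⟩ := exists_sq_add_sq_eq_one_and_add_mul_eq h2 hk hu
    refine ⟨x, y, h1, ?_⟩
    rw [h1, hxy]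
    field_simp
    ring

end SqAddSq

/-- For `p ≡ 1 (mod 4)` prime and `ζ` a proper zero divisor of `ℤ[i]/pℤ[i]`,
`{N(β + ζ) : N(β) = 1} = (ℤ/pℤ) \ {1}`. -/
theorem norms_near_zero_divisor (p : ℕ) (hp : p.Prime) (hmod : p % 4 = 1)
    (ζ : R p) (hζ0 : ζ ≠ 0) (hζ : Gnorm ζ = 0) :
    {c : ZMod p | ∃ β : R p, Gnorm β = 1 ∧ Gnorm (β + ζ) = c} = {(1 : ZMod p)}ᶜ := by
  have : Fact p.Prime := ⟨hp⟩
  have h2 : (2 : ZMod p) ≠ 0 := Ring.two_ne_zero (by rw [ZMod.ringChar_zmod_n]; omega)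
  obtain ⟨a, b⟩ := ζ
  obtain ⟨ha, k, hk, rfl⟩ := exists_sq_eq_neg_one_of_sq_add_sq_eq_zero hζ0 hζ
  simpa only [Prod.exists, Gnorm, Prod.mk_add_mk] using
    setOf_sq_add_sq_eq_one_shift_eq_compl h2 hk ha
end

section
/- Let p be a prime and t ∈ ℤ/pℤ with t ≠ 0 and t ≠ 1. Then the cubic polynomial P_t(x,y) = y(x+1)² − x(y+1)(y+t) is irreducible over the algebraic closure of ℤ/pℤ (absolutely irreducible). -/
/-!
Write `P_t = y·x² + b·x + y` as a quadratic in `x` over `K[y]`, with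
`b = -y² + (1 - t)·y - t`. Since `y ∤ b` (as `t ≠ 0`), `P_t` is primitive, so a factorization
would be a product of two factors linear in `x`. Comparing coefficients, `b = u + v` with
`u·v = y²`; then either `y` divides both `u` and `v`, so `y ∣ b`, or one of them is a nonzero
constant and the other is divisible by `y²`, so `b` has no linear term — impossible as `t ≠ 1`.
-/

theorem Prime.isUnit_and_sq_dvd_of_mul_eq_sq {M : Type*} [CommMonoidWithZero M]
    [IsCancelMulZero M] {π u v : M} (hπ : Prime π) (hu : ¬π ∣ u) (huv : u * v = π ^ 2) :
    IsUnit u ∧ π ^ 2 ∣ v := by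
  obtain ⟨w, rfl⟩ := hπ.pow_dvd_of_dvd_mul_left 2 hu (dvd_of_eq huv.symm)
  refine ⟨.of_mul_eq_one w (mul_left_cancel₀ (pow_ne_zero 2 hπ.ne_zero) ?_),
    dvd_mul_right _ _⟩
  rw [mul_left_comm, huv, mul_one]

namespace Polynomial

section CommSemiring

variable {R : Type*} [CommSemiring R]

theorem isPrimitive_quadratic_of_irreducible {π b : R} (hπ : Irreducible π) (hb : ¬π ∣ b) :
    (C π * X ^ 2 + C b * X + C π).IsPrimitive := by
  intro r hr
  rw [C_dvd_iff_dvd_coeff] at hr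
  rcases hπ.dvd_iff.mp (by simpa using hr 0) with hunit | hassoc
  · exact hunit
  · exact absurd (hassoc.dvd.trans (by simpa using hr 1)) hb

theorem exists_mul_eq_and_add_eq_of_quadratic_eq_mul {a b c : R} {g h : R[X]}
    (hg : g.natDegree ≤ 1) (hh : h.natDegree ≤ 1)
    (hgh : C a * X ^ 2 + C b * X + C c = g * h) :
    ∃ u v, u * v = a * c ∧ u + v = b := by
  have hprod : g * h = C (g.coeff 1 * h.coeff 1) * X ^ 2 +
      C (g.coeff 1 * h.coeff 0 + g.coeff 0 * h.coeff 1) * X + C (g.coeff 0 * h.coeff 0) := by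
    conv_lhs => rw [eq_X_add_C_of_natDegree_le_one hg, eq_X_add_C_of_natDegree_le_one hh]
    simp only [C_mul, C_add]
    ring
  have hcoeff (n : ℕ) := congrArg (coeff · n) (hgh.trans hprod)
  simp only [coeff_add, coeff_C_mul_X_pow, coeff_C_mul_X, coeff_C] at hcoeff
  have h2 : a = g.coeff 1 * h.coeff 1 := by simpa using hcoeff 2
  have h1 : b = g.coeff 1 * h.coeff 0 + g.coeff 0 * h.coeff 1 := by simpa using hcoeff 1
  have h0 : c = g.coeff 0 * h.coeff 0 := by simpa using hcoeff 0
  exact ⟨g.coeff 1 * h.coeff 0, g.coeff 0 * h.coeff 1, by rw [h2, h0]; ring, h1.symm⟩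

end CommSemiring

section IsDomain

variable {R : Type*} [CommSemiring R] [IsDomain R]

theorem irreducible_quadratic_of_isPrimitive {a b c : R} (ha : a ≠ 0)
    (hprim : (C a * X ^ 2 + C b * X + C c).IsPrimitive)
    (hb : ∀ u v, u * v = a * c → u + v ≠ b) :
    Irreducible (C a * X ^ 2 + C b * X + C c) := by
  have hdeg := natDegree_quadratic (b := b) (c := c) ha
  refine ⟨fun hunit => by simp [natDegree_eq_zero_of_isUnit hunit] at hdeg, fun g h hgh => ?_⟩
  have hf : C a * X ^ 2 + C b * X + C c ≠ 0 := fun h0 => by simp [h0] at hdeg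
  have hsum : g.natDegree + h.natDegree = 2 := by
    rw [← natDegree_mul (left_ne_zero_of_mul (hgh ▸ hf)) (right_ne_zero_of_mul (hgh ▸ hf)),
      ← hgh, hdeg]
  have isUnit_of_natDegree_eq_zero (k l : R[X]) (hkl : C a * X ^ 2 + C b * X + C c = k * l)
      (hk : k.natDegree = 0) : IsUnit k := by
    rw [eq_C_of_natDegree_eq_zero hk] at hkl ⊢
    exact isUnit_C.mpr (hprim _ ⟨l, hkl⟩)
  by_cases hg : g.natDegree = 0
  · exact .inl (isUnit_of_natDegree_eq_zero g h hgh hg)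
  by_cases hh : h.natDegree = 0
  · exact .inr (isUnit_of_natDegree_eq_zero h g (hgh.trans (mul_comm g h)) hh)
  obtain ⟨u, v, huv, rfl⟩ :=
    exists_mul_eq_and_add_eq_of_quadratic_eq_mul (by omega) (by omega) hgh
  exact absurd rfl (hb u v huv)

end IsDomain

theorem irreducible_quadratic_of_prime {R : Type*} [CommRing R] [IsDomain R] {π b : R}
    (hπ : Prime π) (hb : ¬π ∣ b) (hb' : ∀ w, IsUnit w → ¬π ^ 2 ∣ b - w) :
    Irreducible (C π * X ^ 2 + C b * X + C π) := by
  refine irreducible_quadratic_of_isPrimitive hπ.ne_zero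
    (isPrimitive_quadratic_of_irreducible hπ.irreducible hb) ?_
  rintro u v huv rfl
  rw [← sq] at huv
  by_cases hu : π ∣ u
  · by_cases hv : π ∣ v
    · exact hb (dvd_add hu hv)
    · obtain ⟨hv, hdvd⟩ := hπ.isUnit_and_sq_dvd_of_mul_eq_sq hv (by rwa [mul_comm])
      exact hb' v hv (by simpa using hdvd)
  · obtain ⟨hu, hdvd⟩ := hπ.isUnit_and_sq_dvd_of_mul_eq_sq hu huv
    exact hb' u hu (by simpa using hdvd)

theorem irreducible_C_X_mul_X_sq_add_C_mul_X_add_C_X {K : Type*} [Field K] {b : K[X]}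
    (hb₀ : b.coeff 0 ≠ 0) (hb₁ : b.coeff 1 ≠ 0) :
    Irreducible (C X * X ^ 2 + C b * X + C X : K[X][X]) := by
  refine irreducible_quadratic_of_prime prime_X (by rwa [X_dvd_iff]) fun w hw hdvd => hb₁ ?_
  obtain ⟨c, -, rfl⟩ := isUnit_iff.mp hw
  simpa [coeff_C] using X_pow_dvd_iff.mp hdvd 1 one_lt_two

theorem irreducible_C_X_mul_X_add_one_sq_sub {K : Type*} [Field K] {s : K} (hs₀ : s ≠ 0)
    (hs₁ : s ≠ 1) :
    Irreducible (C X * (X + 1) ^ 2 - X * (C X + 1) * (C X + C (C s)) : K[X][X]) := by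
  have hquad : (C X * (X + 1) ^ 2 - X * (C X + 1) * (C X + C (C s)) : K[X][X]) =
      C X * X ^ 2 + C (-X ^ 2 + C (1 - s) * X - C s) * X + C X := by
    simp only [C_sub, C_add, C_mul, C_neg, C_pow, C_1]
    ring
  rw [hquad]
  refine irreducible_C_X_mul_X_sq_add_C_mul_X_add_C_X ?_ ?_
  · simpa [coeff_C] using hs₀
  · simpa [coeff_X, coeff_C, sub_eq_zero] using hs₁.symm

end Polynomial

namespace MvPolynomial

variable (R : Type*) [CommSemiring R]

noncomputable def finTwoAlgEquivPolynomialPolynomial :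
    MvPolynomial (Fin 2) R ≃ₐ[R] Polynomial (Polynomial R) :=
  (finSuccEquiv R 1).trans <| Polynomial.mapAlgEquiv <|
    (finSuccEquiv R 0).trans (Polynomial.mapAlgEquiv (isEmptyAlgEquiv R (Fin 0)))

@[simp]
theorem finTwoAlgEquivPolynomialPolynomial_X_zero :
    finTwoAlgEquivPolynomialPolynomial R (X 0) = Polynomial.X := by
  simp [finTwoAlgEquivPolynomialPolynomial, finSuccEquiv_X_zero]

@[simp]
theorem finTwoAlgEquivPolynomialPolynomial_X_one :
    finTwoAlgEquivPolynomialPolynomial R (X 1) = Polynomial.C Polynomial.X := by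
  rw [show (1 : Fin 2) = Fin.succ 0 from rfl]
  simp only [finTwoAlgEquivPolynomialPolynomial, AlgEquiv.trans_apply, finSuccEquiv_X_succ]
  simp [finSuccEquiv_X_zero]

@[simp]
theorem finTwoAlgEquivPolynomialPolynomial_C (r : R) :
    finTwoAlgEquivPolynomialPolynomial R (C r) = Polynomial.C (Polynomial.C r) :=
  (finTwoAlgEquivPolynomialPolynomial R).commutes r

end MvPolynomial

open MvPolynomial

/-- For `p` prime and `t ∈ ℤ/pℤ` with `t ≠ 0, 1`, the cubic polynomial
`P_t(x,y) = y(x+1)² − x(y+1)(y+t)` is absolutely irreducible, i.e. irreducible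
over the algebraic closure of `ℤ/pℤ`. -/
theorem Pt_absolutely_irreducible (p : ℕ) [Fact p.Prime] (t : ZMod p)
    (ht0 : t ≠ 0) (ht1 : t ≠ 1) :
    Irreducible
      ((X 1 * (X 0 + 1) ^ 2 -
          X 0 * (X 1 + 1) * (X 1 + C (algebraMap (ZMod p) (AlgebraicClosure (ZMod p)) t))) :
        MvPolynomial (Fin 2) (AlgebraicClosure (ZMod p))) := by
  have hs₀ : algebraMap (ZMod p) (AlgebraicClosure (ZMod p)) t ≠ 0 := by simpa using ht0
  have hs₁ : algebraMap (ZMod p) (AlgebraicClosure (ZMod p)) t ≠ 1 := by simpa using ht1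
  rw [← MulEquiv.irreducible_iff (finTwoAlgEquivPolynomialPolynomial _)]
  simpa using Polynomial.irreducible_C_X_mul_X_add_one_sq_sub hs₀ hs₁
end

section
/- Let p be an odd prime with p ≡ 3 (mod 4) and n = (p+1)/2. In the Cayley graph G_p on the additive group ℤ[i]/pℤ[i] with connection set H = {β : N(β) = 1}, every vertex is at distance at most 3 from 0; i.e., every element of ℤ[i]/pℤ[i] is a sum of at most 3 elements of H. -/
/-!
Since `p ≡ 3 (mod 4)`, `-1` is not a square mod `p`, so the norm is anisotropic and the
numbers of square roots of `a` and of `-a` add up to `2` for every `a`. Counting the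
hyperbola `x² - y² = s` (which has `p - 1` points) then shows that the circle `x² + y² = s`,
`s ≠ 0`, has `p + 1` points, so `s - c²` is a square for at least `(p + 1) / 2` values of `c`.

Let `γ ≠ 0` have norm `s` and let `c² + t² = s`. Then `β = γ (c + t i) / s` has norm `1` and
`γ - β` has norm `w = s + 1 - 2c`; a nonzero `δ` of norm `w` is the sum of the two norm-one
elements `δ (w ± y i) / (2w)` as soon as `w (4 - w) = y²`. Writing `w = 2 + u`, the second
condition reads `4 - u²` is a square, so both conditions on `c` hold on sets of size at least
`(p + 1) / 2`, which must meet.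
-/

open Finset

section FiniteField

variable {F : Type*} [Field F]

lemma ringChar_ne_two_of_not_isSquare_neg_one (h : ¬IsSquare (-1 : F)) : ringChar F ≠ 2 := by
  intro hF
  have h2 : (2 : F) = 0 := by exact_mod_cast hF ▸ ringChar.Nat.cast_ringChar
  exact h ⟨1, by linear_combination -h2⟩

lemma eq_zero_and_eq_zero_of_sq_add_sq_eq_zero (h : ¬IsSquare (-1 : F)) {a b : F}
    (hab : a ^ 2 + b ^ 2 = 0) : a = 0 ∧ b = 0 := by
  by_cases hb : b = 0
  · subst hb
    simpa using hab
  · exact absurd ⟨a / b, by field_simp; linear_combination -hab⟩ h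

variable [Fintype F] [DecidableEq F]

lemma card_sq_eq_add_card_sq_eq_neg (h : ¬IsSquare (-1 : F)) (a : F) :
    #{y : F | y ^ 2 = a} + #{y : F | y ^ 2 = -a} = 2 := by
  have hF := ringChar_ne_two_of_not_isSquare_neg_one h
  have hχ : quadraticChar F (-a) = -quadraticChar F a := by
    rw [neg_eq_neg_one_mul, map_mul, quadraticChar_neg_one_iff_not_isSquare.mpr h, neg_one_mul]
  have ha := quadraticChar_card_sqrts hF a
  have hna := quadraticChar_card_sqrts hF (-a)
  simp only [Set.toFinset_ofPred] at ha hna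
  zify
  rw [ha, hna, hχ]
  ring

lemma card_sq_sub_sq_eq (h2 : (2 : F) ≠ 0) {d : F} (hd : d ≠ 0) :
    #{z : F × F | z.1 ^ 2 - z.2 ^ 2 = d} = Fintype.card F - 1 := by
  have hsum_ne_zero : ∀ z : F × F, z.1 ^ 2 - z.2 ^ 2 = d → z.1 + z.2 ≠ 0 := fun z hz h0 =>
    hd (by rw [← hz]; linear_combination (z.1 - z.2) * h0)
  rw [← card_univ, ← card_erase_of_mem (mem_univ 0), ← filter_ne']
  refine card_nbij' (fun z => z.1 + z.2) (fun u => ((u + d / u) / 2, (u - d / u) / 2))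
    ?_ ?_ ?_ ?_
  · intro z hz
    simp only [coe_filter, mem_univ, true_and, Set.mem_ofPred_eq] at hz ⊢
    exact hsum_ne_zero z hz
  · intro u hu
    simp only [coe_filter, mem_univ, true_and, Set.mem_ofPred_eq] at hu ⊢
    field_simp
    ring
  · intro z hz
    simp only [coe_filter, mem_univ, true_and, Set.mem_ofPred_eq] at hz
    have hdiv : d / (z.1 + z.2) = z.1 - z.2 := by
      rw [div_eq_iff (hsum_ne_zero z hz), ← hz]
      ring
    ext <;> simp only [hdiv] <;> field_simp <;> ring
  · intro u hu
    simp only [coe_filter, mem_univ, true_and, Set.mem_ofPred_eq] at hu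
    field_simp
    ring

lemma sum_card_sq_eq_sub_sq (h : ¬IsSquare (-1 : F)) {s : F} (hs : s ≠ 0) :
    ∑ x : F, #{y : F | y ^ 2 = s - x ^ 2} = Fintype.card F + 1 := by
  have hpairs : ∑ x : F, (#{y : F | y ^ 2 = s - x ^ 2} + #{y : F | y ^ 2 = x ^ 2 - s})
      = 2 * Fintype.card F := by
    simp only [fun x : F => neg_sub s (x ^ 2) ▸ card_sq_eq_add_card_sq_eq_neg h (s - x ^ 2),
      sum_const, card_univ, smul_eq_mul, mul_comm]
  have hhyperbola : ∑ x : F, #{y : F | y ^ 2 = x ^ 2 - s} = Fintype.card F - 1 := by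
    rw [← card_sq_sub_sq_eq (Ring.two_ne_zero (ringChar_ne_two_of_not_isSquare_neg_one h)) hs]
    simp only [card_filter, Fintype.sum_prod_type]
    refine sum_congr rfl fun x _ => sum_congr rfl fun y _ => if_congr ?_ rfl rfl
    constructor <;> intro hxy <;> linear_combination -hxy
  rw [sum_add_distrib, hhyperbola] at hpairs
  have := Fintype.card_pos (α := F)
  omega

lemma card_add_one_le_two_mul_card_isSquare_sub_sq (h : ¬IsSquare (-1 : F)) {s : F}
    (hs : s ≠ 0) : Fintype.card F + 1 ≤ 2 * #{x : F | IsSquare (s - x ^ 2)} := by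
  rw [← sum_card_sq_eq_sub_sq h hs, card_filter (fun x => IsSquare (s - x ^ 2)), mul_sum]
  refine sum_le_sum fun x _ => ?_
  split_ifs with hx
  · have := card_sq_eq_add_card_sq_eq_neg h (s - x ^ 2)
    omega
  · simp only [mul_zero, nonpos_iff_eq_zero, card_eq_zero, filter_eq_empty_iff]
    exact fun y _ hy => hx ⟨y, by rw [← hy, sq]⟩

lemma exists_isSquare_sub_sq_and_isSquare_mul_four_sub (h : ¬IsSquare (-1 : F)) {s : F}
    (hs : s ≠ 0) :
    ∃ c : F, IsSquare (s - c ^ 2) ∧ IsSquare ((s + 1 - 2 * c) * (4 - (s + 1 - 2 * c))) := by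
  have h2 := Ring.two_ne_zero (ringChar_ne_two_of_not_isSquare_neg_one h)
  have h4 : (4 : F) ≠ 0 := by
    simpa [show (4 : F) = 2 * 2 by norm_num] using mul_ne_zero h2 h2
  let A : Finset F := {c | IsSquare (s - c ^ 2)}
  let B : Finset F := image (fun u => (s - 1 - u) / 2) {u | IsSquare (4 - u ^ 2)}
  have hA : Fintype.card F + 1 ≤ 2 * #A := card_add_one_le_two_mul_card_isSquare_sub_sq h hs
  have hB : Fintype.card F + 1 ≤ 2 * #B := by
    rw [card_image_of_injective _ fun u v huv => by simpa [div_left_inj' h2] using huv]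
    exact card_add_one_le_two_mul_card_isSquare_sub_sq h h4
  obtain ⟨c, hc⟩ : (A ∩ B).Nonempty := by
    rw [← card_pos]
    have := card_union_add_card_inter A B
    have := card_le_univ (A ∪ B)
    omega
  obtain ⟨hcA, hcB⟩ := mem_inter.mp hc
  simp only [A, B, mem_filter, mem_image, mem_univ, true_and] at hcA hcB
  obtain ⟨u, hu, rfl⟩ := hcB
  refine ⟨_, hcA, ?_⟩
  convert hu using 1
  field_simp
  ring

end FiniteField

section GaussianModel

variable {p : ℕ} [Fact p.Prime]

lemma gnorm_eq_zero_iff (h : ¬IsSquare (-1 : ZMod p)) {β : R p} : Gnorm β = 0 ↔ β = 0 := by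
  refine ⟨fun hβ => ?_, fun hβ => by simp [hβ, Gnorm]⟩
  obtain ⟨h1, h2⟩ := eq_zero_and_eq_zero_of_sq_add_sq_eq_zero h hβ
  exact Prod.ext h1 h2

lemma exists_gnorm_eq_one_and_gnorm_sub_eq {γ : R p} (hγ : Gnorm γ ≠ 0) {c t : ZMod p}
    (hct : c ^ 2 + t ^ 2 = Gnorm γ) :
    ∃ β : R p, Gnorm β = 1 ∧ Gnorm (γ - β) = Gnorm γ + 1 - 2 * c := by
  set s := Gnorm γ
  have hs : γ.1 ^ 2 + γ.2 ^ 2 = s := rfl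
  refine ⟨((c * γ.1 - t * γ.2) / s, (c * γ.2 + t * γ.1) / s), ?_, ?_⟩
  · simp only [Gnorm]
    field_simp
    linear_combination (γ.1 ^ 2 + γ.2 ^ 2) * hct + s * hs
  · simp only [Gnorm, Prod.fst_sub, Prod.snd_sub]
    field_simp
    linear_combination (γ.1 ^ 2 + γ.2 ^ 2) * hct + (s + s ^ 2 - 2 * s * c) * hs

lemma exists_add_of_isSquare_mul_four_sub (h2 : (2 : ZMod p) ≠ 0) {δ : R p} (hδ : Gnorm δ ≠ 0)
    (hsq : IsSquare (Gnorm δ * (4 - Gnorm δ))) :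
    ∃ β₂ β₃ : R p, Gnorm β₂ = 1 ∧ Gnorm β₃ = 1 ∧ δ = β₂ + β₃ := by
  set w := Gnorm δ
  have hw : δ.1 ^ 2 + δ.2 ^ 2 = w := rfl
  obtain ⟨y, hy⟩ := hsq
  refine ⟨((w * δ.1 - y * δ.2) / (2 * w), (w * δ.2 + y * δ.1) / (2 * w)),
    ((w * δ.1 + y * δ.2) / (2 * w), (w * δ.2 - y * δ.1) / (2 * w)), ?_, ?_, ?_⟩
  · simp only [Gnorm]
    field_simp
    linear_combination (w ^ 2 + y ^ 2) * hw - w * hy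
  · simp only [Gnorm]
    field_simp
    linear_combination (w ^ 2 + y ^ 2) * hw - w * hy
  · ext <;> simp only [Prod.fst_add, Prod.snd_add] <;> field_simp <;> ring

end GaussianModel

theorem diameter_three_of_three_mod_four_general (p : ℕ) (hp : p.Prime) (hmod : p % 4 = 3)
    (γ : R p) :
    ∃ k ≤ 3, ∃ f : Fin k → R p, (∀ j, Gnorm (f j) = 1) ∧ γ = ∑ j, f j := by
  have : Fact p.Prime := ⟨hp⟩
  have h : ¬IsSquare (-1 : ZMod p) := by
    rw [ZMod.exists_sq_eq_neg_one_iff]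
    omega
  rcases eq_or_ne γ 0 with rfl | hγ
  · exact ⟨0, by norm_num, ![], nofun, by simp⟩
  have hs : Gnorm γ ≠ 0 := (gnorm_eq_zero_iff h).not.mpr hγ
  obtain ⟨c, ⟨t, ht⟩, hsq⟩ := exists_isSquare_sub_sq_and_isSquare_mul_four_sub h hs
  obtain ⟨β, hβ, hδ⟩ := exists_gnorm_eq_one_and_gnorm_sub_eq (c := c) (t := t) hs
    (by linear_combination -ht)
  rcases eq_or_ne (γ - β) 0 with h0 | h0
  · exact ⟨1, by norm_num, ![β], by simp [hβ], by simp [sub_eq_zero.mp h0]⟩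
  rw [← hδ] at hsq
  obtain ⟨β₂, β₃, h₂, h₃, hsum⟩ := exists_add_of_isSquare_mul_four_sub
    (Ring.two_ne_zero (ringChar_ne_two_of_not_isSquare_neg_one h))
    ((gnorm_eq_zero_iff h).not.mpr h0) hsq
  refine ⟨3, le_rfl, ![β, β₂, β₃], ?_, ?_⟩
  · intro j
    fin_cases j <;> simpa
  · simp [Fin.sum_univ_three, add_assoc, ← hsum]

/-- For a prime `p ≡ 3 (mod 4)` with `n = (p+1)/2`: in the Cayley graph of
`ℤ[i]/pℤ[i]` with connection set `H = {β : N(β) = 1}`, every vertex is at distance at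
most `3` from `0`, i.e. every element is a sum of at most three norm-one elements. -/
theorem diameter_three_of_three_mod_four (p n : ℕ) (hp : p.Prime) (hmod : p % 4 = 3)
    (hn : n = (p + 1) / 2) (γ : R p) :
    ∃ k ≤ 3, ∃ f : Fin k → R p, (∀ j, Gnorm (f j) = 1) ∧ γ = ∑ j, f j :=
  diameter_three_of_three_mod_four_general p hp hmod γ
end
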